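/- Let H be a coupled Hopf algebra over a field k, i.e. two Hopf algebra structures H₁ = (H, m, η, Δ₁, ε₁, S₁) and H₂ = (H, m, η, Δ₂, ε₂, S₂) on the same algebra with a coupling map C satisfying m∘(C⊗id)∘Δ₁ = η∘ε₂ and m∘(id⊗C)∘Δ₂ = η∘ε₁ and commuting coproducts. Then C is an algebra anti-homomorphism: C(gh) = C(h)C(g) for all g, h ∈ H, and C(1) = 1. -/
import Mathlib


open TensorProduct LinearMap

set_option maxHeartbeats 1000000
set_option synthInstance.maxHeartbeats 400000

noncomputable section

/-- A coupled Hopf algebra over a field `k`: two Hopf algebra structures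
`H₁ = (H, m, η, Δ₁, ε₁, S₁)` and `H₂ = (H, m, η, Δ₂, ε₂, S₂)` on the same `k`-algebra
`H`, together with a coupling map `C` satisfying `m∘(C⊗id)∘Δ₁ = η∘ε₂` and
`m∘(id⊗C)∘Δ₂ = η∘ε₁`, whose coproducts commute. -/
structure CoupledHopfAlgebra (k H : Type*) [Field k] [Ring H] [Algebra k H] where
  Δ₁ : H →ₗ[k] H ⊗[k] H
  Δ₂ : H →ₗ[k] H ⊗[k] H
  ε₁ : H →ₐ[k] k
  ε₂ : H →ₐ[k] k
  S₁ : H →ₗ[k] H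
  S₂ : H →ₗ[k] H
  C : H →ₗ[k] H
  /-- the coproducts are algebra maps -/
  Δ₁_mul : ∀ a b : H, Δ₁ (a * b) = Δ₁ a * Δ₁ b
  Δ₂_mul : ∀ a b : H, Δ₂ (a * b) = Δ₂ a * Δ₂ b
  Δ₁_one : Δ₁ 1 = 1
  Δ₂_one : Δ₂ 1 = 1
  /-- coassociativity -/
  coassoc₁ : (TensorProduct.assoc k H H H).toLinearMap ∘ₗ LinearMap.rTensor H Δ₁ ∘ₗ Δ₁ =
    LinearMap.lTensor H Δ₁ ∘ₗ Δ₁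
  coassoc₂ : (TensorProduct.assoc k H H H).toLinearMap ∘ₗ LinearMap.rTensor H Δ₂ ∘ₗ Δ₂ =
    LinearMap.lTensor H Δ₂ ∘ₗ Δ₂
  /-- counitality -/
  counit₁_l : (TensorProduct.lid k H).toLinearMap ∘ₗ
    LinearMap.rTensor H ε₁.toLinearMap ∘ₗ Δ₁ = LinearMap.id
  counit₁_r : (TensorProduct.rid k H).toLinearMap ∘ₗ
    LinearMap.lTensor H ε₁.toLinearMap ∘ₗ Δ₁ = LinearMap.id
  counit₂_l : (TensorProduct.lid k H).toLinearMap ∘ₗ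
    LinearMap.rTensor H ε₂.toLinearMap ∘ₗ Δ₂ = LinearMap.id
  counit₂_r : (TensorProduct.rid k H).toLinearMap ∘ₗ
    LinearMap.lTensor H ε₂.toLinearMap ∘ₗ Δ₂ = LinearMap.id
  /-- `S₁` is an antipode for `H₁`, `S₂` for `H₂` -/
  antipode₁_l : LinearMap.mul' k H ∘ₗ LinearMap.rTensor H S₁ ∘ₗ Δ₁ =
    (Algebra.linearMap k H) ∘ₗ ε₁.toLinearMap
  antipode₁_r : LinearMap.mul' k H ∘ₗ LinearMap.lTensor H S₁ ∘ₗ Δ₁ =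
    (Algebra.linearMap k H) ∘ₗ ε₁.toLinearMap
  antipode₂_l : LinearMap.mul' k H ∘ₗ LinearMap.rTensor H S₂ ∘ₗ Δ₂ =
    (Algebra.linearMap k H) ∘ₗ ε₂.toLinearMap
  antipode₂_r : LinearMap.mul' k H ∘ₗ LinearMap.lTensor H S₂ ∘ₗ Δ₂ =
    (Algebra.linearMap k H) ∘ₗ ε₂.toLinearMap
  /-- the coupling conditions: `m∘(C⊗id)∘Δ₁ = η∘ε₂` and `m∘(id⊗C)∘Δ₂ = η∘ε₁` -/
  coupling₁ : LinearMap.mul' k H ∘ₗ LinearMap.rTensor H C ∘ₗ Δ₁ =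
    (Algebra.linearMap k H) ∘ₗ ε₂.toLinearMap
  coupling₂ : LinearMap.mul' k H ∘ₗ LinearMap.lTensor H C ∘ₗ Δ₂ =
    (Algebra.linearMap k H) ∘ₗ ε₁.toLinearMap
  /-- the coproducts commute -/
  comul_comm₁ : (TensorProduct.assoc k H H H).toLinearMap ∘ₗ
      LinearMap.rTensor H Δ₁ ∘ₗ Δ₂ = LinearMap.lTensor H Δ₂ ∘ₗ Δ₁
  comul_comm₂ : (TensorProduct.assoc k H H H).toLinearMap ∘ₗ
      LinearMap.rTensor H Δ₂ ∘ₗ Δ₁ = LinearMap.lTensor H Δ₁ ∘ₗ Δ₂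
namespace CHAux

variable {k H : Type*} [Field k] [Ring H] [Algebra k H]

local notation "T" => H ⊗[k] H

/-- convolution product on `Hom(H⊗H, H)` relative to a comultiplication `D`. -/
def cv (D : H →ₗ[k] T) (f g : T →ₗ[k] H) : T →ₗ[k] H :=
  LinearMap.mul' k H ∘ₗ TensorProduct.map f g ∘ₗ
    (tensorTensorTensorComm k H H H H).toLinearMap ∘ₗ TensorProduct.map D D

lemma cv_tmul (D : H →ₗ[k] T) (f g : T →ₗ[k] H) (x y : H) :
    cv D f g (x ⊗ₜ y) = LinearMap.mul' k H (TensorProduct.map f g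
      ((tensorTensorTensorComm k H H H H) (D x ⊗ₜ D y))) := by
  simp [cv]

/-- `a ⊗ b ↦ a * b` in the tensor-square ring, via the shuffle. -/
lemma mulmul (a b : T) :
    TensorProduct.map (LinearMap.mul' k H) (LinearMap.mul' k H)
      ((tensorTensorTensorComm k H H H H) (a ⊗ₜ b)) = a * b := by
  induction a with
  | zero => simp
  | add u v hu hv => simp [add_tmul, add_mul, mul_add, hu, hv]
  | tmul x₁ x₂ =>
    induction b with
    | zero => simp
    | add u v hu hv => simp [tmul_add, mul_add, add_mul, hu, hv]
    | tmul y₁ y₂ => simp [Algebra.TensorProduct.tmul_mul_tmul]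

/-- the unit `η ∘ ε ∘ m` of the convolution algebra. -/
def uu (e : H →ₐ[k] k) : T →ₗ[k] H :=
  (Algebra.linearMap k H ∘ₗ e.toLinearMap) ∘ₗ LinearMap.mul' k H

lemma uu_tmul (e : H →ₐ[k] k) (x y : H) :
    uu e (x ⊗ₜ y) = algebraMap k H (e x * e y) := by
  simp [uu]

section A

variable (A : CoupledHopfAlgebra k H)

lemma DT_mul (x y : H) : A.Δ₁ (x * y) = A.Δ₁ x * A.Δ₁ y := A.Δ₁_mul x y

/-- `G : g ⊗ h ↦ C h * C g`. -/
def Gm : T →ₗ[k] H :=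
  LinearMap.mul' k H ∘ₗ TensorProduct.map A.C A.C ∘ₗ (TensorProduct.comm k H H).toLinearMap

lemma Gm_tmul (x y : H) : Gm A (x ⊗ₜ y) = A.C y * A.C x := by
  simp [Gm]

/-- coupling₁ applied to an element. -/
lemma coupling₁_apply (x : H) :
    LinearMap.mul' k H (LinearMap.rTensor H A.C (A.Δ₁ x)) = algebraMap k H (A.ε₂ x) :=
  LinearMap.congr_fun A.coupling₁ x

lemma coupling₂_apply (x : H) :
    LinearMap.mul' k H (LinearMap.lTensor H A.C (A.Δ₂ x)) = algebraMap k H (A.ε₁ x) :=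
  LinearMap.congr_fun A.coupling₂ x

lemma counit₁_r_apply (x : H) :
    (TensorProduct.rid k H) (LinearMap.lTensor H A.ε₁.toLinearMap (A.Δ₁ x)) = x :=
  LinearMap.congr_fun A.counit₁_r x

lemma counit₂_l_apply (x : H) :
    (TensorProduct.lid k H) (LinearMap.rTensor H A.ε₂.toLinearMap (A.Δ₂ x)) = x :=
  LinearMap.congr_fun A.counit₂_l x

/-- F1a : `(C∘m) ⋆₁ m = η∘ε₂∘m`. -/
lemma F1a : cv A.Δ₁ (A.C ∘ₗ LinearMap.mul' k H) (LinearMap.mul' k H) = uu A.ε₂ := by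
  apply TensorProduct.ext'
  intro x y
  have key : ∀ a b : T,
      LinearMap.mul' k H (TensorProduct.map (A.C ∘ₗ LinearMap.mul' k H) (LinearMap.mul' k H)
        ((tensorTensorTensorComm k H H H H) (a ⊗ₜ b)))
      = LinearMap.mul' k H (LinearMap.rTensor H A.C (a * b)) := by
    intro a b
    induction a with
    | zero => simp
    | add u v hu hv => simp [add_tmul, add_mul, mul_add, hu, hv]
    | tmul x₁ x₂ =>
      induction b with
      | zero => simp
      | add u v hu hv => simp [tmul_add, mul_add, add_mul, hu, hv]
      | tmul y₁ y₂ => simp [Algebra.TensorProduct.tmul_mul_tmul, mul_assoc]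
  rw [cv_tmul, key, ← A.Δ₁_mul, coupling₁_apply, uu_tmul, map_mul]

/-- F1b : `m ⋆₂ G = η∘ε₁∘m`. -/
lemma F1b : cv A.Δ₂ (LinearMap.mul' k H) (Gm A) = uu A.ε₁ := by
  apply TensorProduct.ext'
  intro x y
  have key : ∀ a b : T,
      LinearMap.mul' k H (TensorProduct.map (LinearMap.mul' k H) (Gm A)
        ((tensorTensorTensorComm k H H H H) (a ⊗ₜ b)))
      = LinearMap.mul' k H (LinearMap.lTensor H A.C
          (a * (LinearMap.mul' k H (LinearMap.lTensor H A.C b) ⊗ₜ 1))) := by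
    intro a b
    induction a with
    | zero => simp
    | add u v hu hv => simp [add_tmul, add_mul, mul_add, hu, hv]
    | tmul x₁ x₂ =>
      induction b with
      | zero => simp
      | add u v hu hv => simp [tmul_add, mul_add, add_mul, hu, hv]
      | tmul y₁ y₂ =>
        simp [Gm_tmul, Algebra.TensorProduct.tmul_mul_tmul, mul_assoc]
  rw [cv_tmul, key, coupling₂_apply]
  have h1 : (algebraMap k H (A.ε₁ y) ⊗ₜ[k] (1:H)) = algebraMap k (H ⊗[k] H) (A.ε₁ y) :=
    (Algebra.TensorProduct.algebraMap_apply (A.ε₁ y)).symm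
  rw [h1, ← Algebra.commutes, ← Algebra.smul_def, map_smul, map_smul, coupling₂_apply,
    uu_tmul, Algebra.smul_def, ← map_mul, mul_comm]

/-- F2a : right unit law for `⋆₁`. -/
lemma F2a (f : T →ₗ[k] H) : cv A.Δ₁ f (uu A.ε₁) = f := by
  apply TensorProduct.ext'
  intro x y
  have key : ∀ a b : T,
      LinearMap.mul' k H (TensorProduct.map f (uu A.ε₁)
        ((tensorTensorTensorComm k H H H H) (a ⊗ₜ b)))
      = f ((TensorProduct.rid k H) (LinearMap.lTensor H A.ε₁.toLinearMap a) ⊗ₜ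
          (TensorProduct.rid k H) (LinearMap.lTensor H A.ε₁.toLinearMap b)) := by
    intro a b
    induction a with
    | zero => simp
    | add u v hu hv => simp [add_tmul, hu, hv, tmul_add]
    | tmul x₁ x₂ =>
      induction b with
      | zero => simp
      | add u v hu hv => simp [tmul_add, hu, hv]
      | tmul y₁ y₂ =>
        simp only [tensorTensorTensorComm_tmul, map_tmul, mul'_apply, uu_tmul,
          lTensor_tmul, AlgHom.toLinearMap_apply, rid_tmul]
        rw [← smul_tmul', tmul_smul, map_smul, map_smul, smul_smul, ← Algebra.commutes,
          Algebra.smul_def]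
  rw [cv_tmul, key, counit₁_r_apply, counit₁_r_apply]

/-- F2b : left unit law for `⋆₂`. -/
lemma F2b (f : T →ₗ[k] H) : cv A.Δ₂ (uu A.ε₂) f = f := by
  apply TensorProduct.ext'
  intro x y
  have key : ∀ a b : T,
      LinearMap.mul' k H (TensorProduct.map (uu A.ε₂) f
        ((tensorTensorTensorComm k H H H H) (a ⊗ₜ b)))
      = f ((TensorProduct.lid k H) (LinearMap.rTensor H A.ε₂.toLinearMap a) ⊗ₜ
          (TensorProduct.lid k H) (LinearMap.rTensor H A.ε₂.toLinearMap b)) := by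
    intro a b
    induction a with
    | zero => simp
    | add u v hu hv => simp [add_tmul, hu, hv, tmul_add]
    | tmul x₁ x₂ =>
      induction b with
      | zero => simp
      | add u v hu hv => simp [tmul_add, hu, hv]
      | tmul y₁ y₂ =>
        simp only [tensorTensorTensorComm_tmul, map_tmul, mul'_apply, uu_tmul,
          rTensor_tmul, AlgHom.toLinearMap_apply, lid_tmul]
        rw [← smul_tmul', tmul_smul, map_smul, map_smul, smul_smul, Algebra.smul_def,
          map_mul]
  rw [cv_tmul, key, counit₂_l_apply, counit₂_l_apply]

/-- the triple-product helper `Ψ`: on `(x₁⊗(x₂⊗x₃))⊗(y₁⊗(y₂⊗y₃))` gives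
`f(x₁⊗y₁) * (g(x₂⊗y₂) * h(x₃⊗y₃))`. -/
def Psi (f g h : T →ₗ[k] H) : (H ⊗[k] T) ⊗[k] (H ⊗[k] T) →ₗ[k] H :=
  LinearMap.mul' k H ∘ₗ
    TensorProduct.map f (LinearMap.mul' k H ∘ₗ TensorProduct.map g h ∘ₗ
      (tensorTensorTensorComm k H H H H).toLinearMap) ∘ₗ
    (tensorTensorTensorComm k H (H ⊗[k] H) H (H ⊗[k] H)).toLinearMap

/-- mixed associativity: `f ⋆₁ (g ⋆₂ h) = (f ⋆₁ g) ⋆₂ h`. -/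
lemma mixed_assoc (f g h : T →ₗ[k] H) :
    cv A.Δ₁ f (cv A.Δ₂ g h) = cv A.Δ₂ (cv A.Δ₁ f g) h := by
  apply TensorProduct.ext'
  intro x y
  have claimA : ∀ a b : T,
      LinearMap.mul' k H (TensorProduct.map f (cv A.Δ₂ g h)
        ((tensorTensorTensorComm k H H H H) (a ⊗ₜ b)))
      = Psi f g h ((LinearMap.lTensor H A.Δ₂ a) ⊗ₜ (LinearMap.lTensor H A.Δ₂ b)) := by
    intro a b
    induction a with
    | zero => simp
    | add u v hu hv => simp [add_tmul, hu, hv]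
    | tmul x₁ x₂ =>
      induction b with
      | zero => simp
      | add u v hu hv => simp [tmul_add, hu, hv]
      | tmul y₁ y₂ =>
        simp [Psi, cv_tmul, tensorTensorTensorComm_tmul]
  have claimB : ∀ a b : T,
      LinearMap.mul' k H (TensorProduct.map (cv A.Δ₁ f g) h
        ((tensorTensorTensorComm k H H H H) (a ⊗ₜ b)))
      = Psi f g h ((TensorProduct.assoc k H H H) (LinearMap.rTensor H A.Δ₁ a) ⊗ₜ
          (TensorProduct.assoc k H H H) (LinearMap.rTensor H A.Δ₁ b)) := by
    intro a b
    induction a with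
    | zero => simp
    | add u v hu hv => simp [add_tmul, hu, hv]
    | tmul x₁ x₂ =>
      induction b with
      | zero => simp
      | add u v hu hv => simp [tmul_add, hu, hv]
      | tmul y₁ y₂ =>
        -- reduce `assoc (Δ₁ x₁ ⊗ x₂)` by inducting over `Δ₁ x₁`, `Δ₁ y₁`
        simp only [tensorTensorTensorComm_tmul, map_tmul, mul'_apply, rTensor_tmul]
        rw [cv_tmul]
        generalize A.Δ₁ x₁ = p
        generalize A.Δ₁ y₁ = q
        induction p with
        | zero => simp
        | add u v hu hv => simp [add_tmul, add_mul, hu, hv, tmul_add]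
        | tmul p₁ p₂ =>
          induction q with
          | zero => simp
          | add u v hu hv => simp [tmul_add, add_tmul, add_mul, mul_add, hu, hv]
          | tmul q₁ q₂ =>
            simp [Psi, tensorTensorTensorComm_tmul, assoc_tmul, mul_assoc]
  have hx := LinearMap.congr_fun A.comul_comm₁ x
  have hy := LinearMap.congr_fun A.comul_comm₁ y
  simp only [LinearMap.coe_comp, Function.comp_apply, LinearEquiv.coe_coe] at hx hy
  rw [cv_tmul, claimA, ← hx, ← hy, cv_tmul, claimB]

lemma C_mul_eq : A.C ∘ₗ LinearMap.mul' k H = Gm A := by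
  have h1 := F2a A (A.C ∘ₗ LinearMap.mul' k H)
  have h2 := F1b A
  have h3 := mixed_assoc A (A.C ∘ₗ LinearMap.mul' k H) (LinearMap.mul' k H) (Gm A)
  have h4 := F1a A
  have h5 := F2b A (Gm A)
  calc A.C ∘ₗ LinearMap.mul' k H
      = cv A.Δ₁ (A.C ∘ₗ LinearMap.mul' k H) (uu A.ε₁) := h1.symm
    _ = cv A.Δ₁ (A.C ∘ₗ LinearMap.mul' k H) (cv A.Δ₂ (LinearMap.mul' k H) (Gm A)) := by
        rw [h2]
    _ = cv A.Δ₂ (cv A.Δ₁ (A.C ∘ₗ LinearMap.mul' k H) (LinearMap.mul' k H)) (Gm A) := h3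
    _ = cv A.Δ₂ (uu A.ε₂) (Gm A) := by rw [h4]
    _ = Gm A := h5

end A

end CHAux

/-- The coupling map of a coupled Hopf algebra is an algebra anti-homomorphism:
`C(gh) = C(h)C(g)` and `C(1) = 1`. -/
theorem stmt15 {k H : Type*} [Field k] [Ring H] [Algebra k H]
    (A : CoupledHopfAlgebra k H) :
    (∀ g h : H, A.C (g * h) = A.C h * A.C g) ∧ A.C 1 = 1 := by
  constructor
  · intro g h
    have := LinearMap.congr_fun (CHAux.C_mul_eq A) (g ⊗ₜ[k] h)
    simpa [CHAux.Gm] using this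
  · have h0 := CHAux.coupling₂_apply A 1
    rw [A.Δ₂_one, Algebra.TensorProduct.one_def] at h0
    simpa using h0

end
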